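/- arXiv:2209.05757 — 2 statements merged into one kernel-verified Lean document; each statement's English description precedes it below -/
import Mathlib

section
/- The Gini-index can be updated incrementally under cluster merges: if g_{j-1} is the Gini index of the cluster-size vector (c_1,...,c_{n-j+1}) with total sum n, and clusters of sizes c_{s_1} and c_{s_2} are merged, then the new Gini index g_j of the resulting size vector satisfies g_j = [(n-j)·n·g_{j-1} + Σ_{i} (|c_i - c_{s_1} - c_{s_2}| - |c_i - c_{s_1}| - |c_i - c_{s_2}|) - c_{s_2} - c_{s_1} + |c_{s_1} - c_{s_2}|] / ((n-j-1)·n), where the sum ranges over all i = 1,...,n-j+1 (including s_1 and s_2). -/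
/-!
Write `D v = ∑ p, ∑ q, |v p - v q|`, so that the numerator of the Gini index is `D v / 2` and
`(n - j) n g_{j-1} = D c / 2`. Adding an entry `x` to a vector raises `D` by
`2 ∑ᵢ |vᵢ - x|`. Hence `D c` and `D c'` are both `D` of the untouched clusters plus cross terms,
against `c s₁` and `c s₂` for `c`, against `c s₁ + c s₂` for `c'`; their difference is the
correction sum over the untouched clusters. The terms `i = s₁, s₂` of the full correction sum
equal `c s₂ - |c s₁ - c s₂|` and `c s₁ - |c s₁ - c s₂|`, which the last three terms of the formula
cancel.
-/

open Finset

/-- The Gini index of a length-`k` cluster-size vector `v`, with the denominator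
normalized by the fixed total number of objects `nt`: `g(v) = (Σ_{p<q}|v_p-v_q|)/((k-1)·nt)`. -/
noncomputable def giniN (k nt : ℕ) (v : Fin k → ℕ) : ℝ :=
  (∑ p : Fin k, ∑ q : Fin k, if p < q then |(v p : ℝ) - (v q : ℝ)| else 0) /
    (((k : ℝ) - 1) * (nt : ℝ))

theorem two_mul_sum_sum_ite_lt_abs_sub {ι : Type*} [Fintype ι] [LinearOrder ι] (v : ι → ℝ) :
    2 * ∑ p, ∑ q, (if p < q then |v p - v q| else 0) = ∑ p, ∑ q, |v p - v q| := by
  have hsplit : ∀ p q, |v p - v q| =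
      (if p < q then |v p - v q| else 0) + (if q < p then |v q - v p| else 0) := by
    intro p q
    rcases lt_trichotomy p q with h | rfl | h
    · simp [h, h.not_gt]
    · simp
    · simp [h, h.not_gt, abs_sub_comm]
  rw [sum_congr rfl fun p _ => sum_congr rfl fun q _ => hsplit p q]
  simp only [sum_add_distrib]
  rw [sum_comm (f := fun p q => if q < p then |v q - v p| else 0)]
  ring

theorem sum_sum_abs_sub_insert {ι : Type*} [DecidableEq ι] {s : Finset ι} {x : ι} (hx : x ∉ s)
    (v : ι → ℝ) :
    ∑ p ∈ insert x s, ∑ q ∈ insert x s, |v p - v q| =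
      ∑ p ∈ s, ∑ q ∈ s, |v p - v q| + 2 * ∑ i ∈ s, |v i - v x| := by
  simp only [sum_insert hx, sub_self, abs_zero, zero_add, sum_add_distrib]
  simp_rw [abs_sub_comm (v x)]
  ring

theorem insert_eq_univ_of_card {ι : Type*} [Fintype ι] [DecidableEq ι] {s : Finset ι} {x : ι}
    (hx : x ∉ s) (hcard : #s + 1 = Fintype.card ι) : insert x s = univ :=
  eq_univ_of_card _ (by rw [card_insert_of_notMem hx, hcard])

theorem sum_sum_abs_sub_fin_eq_castLE {k : ℕ} (hk : 1 ≤ k) (w : Fin k → ℝ) :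
    ∑ p, ∑ q, |w p - w q| =
      ∑ i : Fin (k - 1), ∑ j : Fin (k - 1),
          |w (Fin.castLE (k.sub_le 1) i) - w (Fin.castLE (k.sub_le 1) j)| +
        2 * ∑ i : Fin (k - 1), |w (Fin.castLE (k.sub_le 1) i) - w ⟨k - 1, by omega⟩| := by
  have hinj := Fin.castLE_injective (k.sub_le 1)
  have hlast : (⟨k - 1, by omega⟩ : Fin k) ∉ univ.image (Fin.castLE (k.sub_le 1)) := by
    simp only [mem_image, mem_univ, true_and, not_exists, Fin.ext_iff, Fin.val_castLE]
    exact fun i => i.isLt.ne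
  have huniv := insert_eq_univ_of_card hlast (by
    rw [card_image_of_injective _ hinj]; simp; omega)
  rw [← huniv, sum_sum_abs_sub_insert hlast]
  simp only [sum_image fun _ _ _ _ h => hinj h]

theorem sum_sum_abs_sub_merge {k : ℕ} (v : Fin (k + 1) → ℝ) {s₁ s₂ : Fin (k + 1)}
    (hv₁ : 0 ≤ v s₁) (hv₂ : 0 ≤ v s₂) (hne : s₁ ≠ s₂) {e : Fin (k - 1) → Fin (k + 1)}
    (he : Function.Injective e) (hrange : ∀ i, e i ≠ s₁ ∧ e i ≠ s₂) (w : Fin k → ℝ)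
    (hw : ∀ i, w i = if h : i.1 < k - 1 then v (e ⟨i.1, h⟩) else v s₁ + v s₂) :
    ∑ p, ∑ q, |w p - w q| = ∑ p, ∑ q, |v p - v q| +
      2 * (∑ i, (|v i - v s₁ - v s₂| - |v i - v s₁| - |v i - v s₂|)
        - v s₂ - v s₁ + |v s₁ - v s₂|) := by
  have hk : 1 ≤ k := by
    have := Fin.val_ne_of_ne hne; have := s₁.isLt; have := s₂.isLt; omega
  have hs₂ : s₂ ∉ univ.image e := by simpa using fun i => (hrange i).2
  have hs₁ : s₁ ∉ insert s₂ (univ.image e) := by simpa [hne] using fun i => (hrange i).1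
  have huniv := insert_eq_univ_of_card hs₁ (by
    rw [card_insert_of_notMem hs₂, card_image_of_injective _ he]; simp; omega)
  have hsum_univ : ∀ f : Fin (k + 1) → ℝ, ∑ i, f i = f s₁ + f s₂ + ∑ i, f (e i) := by
    intro f
    rw [← huniv, sum_insert hs₁, sum_insert hs₂, sum_image fun _ _ _ _ h => he h, add_assoc]
  have hDv : ∑ p, ∑ q, |v p - v q| = ∑ i, ∑ j, |v (e i) - v (e j)| +
      2 * ∑ i, |v (e i) - v s₂| + 2 * (∑ i, |v (e i) - v s₁| + |v s₂ - v s₁|) := by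
    rw [← huniv, sum_sum_abs_sub_insert hs₁, sum_sum_abs_sub_insert hs₂, sum_insert hs₂]
    simp only [sum_image fun _ _ _ _ h => he h]
    ring
  have hDw : ∑ p, ∑ q, |w p - w q| = ∑ i, ∑ j, |v (e i) - v (e j)| +
      2 * ∑ i, |v (e i) - (v s₁ + v s₂)| := by
    rw [sum_sum_abs_sub_fin_eq_castLE hk]
    simp [hw]
  have h₁ : |v s₁ - v s₁ - v s₂| = v s₂ := by rw [sub_self, zero_sub, abs_neg, abs_of_nonneg hv₂]
  have h₂ : |v s₂ - v s₁ - v s₂| = v s₁ := by rw [sub_sub_cancel_left, abs_neg, abs_of_nonneg hv₁]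
  rw [hDv, hDw, hsum_univ, h₁, h₂]
  simp only [sub_self, abs_zero, sub_sub, sum_sub_distrib, sum_add_distrib,
    abs_sub_comm (v s₂) (v s₁)]
  ring

theorem gini_incremental_update_general (n j : ℕ)
    (c : Fin (n - j + 1) → ℕ)
    (s₁ s₂ : Fin (n - j + 1)) (hne : s₁ ≠ s₂)
    (e : Fin (n - j - 1) → Fin (n - j + 1)) (he : Function.Injective e)
    (hrange : ∀ i, e i ≠ s₁ ∧ e i ≠ s₂)
    (c' : Fin (n - j) → ℕ)
    (hc' : ∀ k : Fin (n - j),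
      c' k = if h : k.1 < n - j - 1 then c (e ⟨k.1, h⟩) else c s₁ + c s₂) :
    giniN (n - j) n c' =
      (((n : ℝ) - (j : ℝ)) * (n : ℝ) * giniN (n - j + 1) n c
        + (∑ i : Fin (n - j + 1),
            (|(c i : ℝ) - (c s₁ : ℝ) - (c s₂ : ℝ)|
              - |(c i : ℝ) - (c s₁ : ℝ)| - |(c i : ℝ) - (c s₂ : ℝ)|))
        - (c s₂ : ℝ) - (c s₁ : ℝ) + |(c s₁ : ℝ) - (c s₂ : ℝ)|) /
      (((n : ℝ) - (j : ℝ) - 1) * (n : ℝ)) := by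
  have hjn : j < n := by
    have := Fin.val_ne_of_ne hne; have := s₁.isLt; have := s₂.isLt; omega
  have hmerge := sum_sum_abs_sub_merge (fun i => (c i : ℝ)) (Nat.cast_nonneg _)
    (Nat.cast_nonneg _) hne he hrange (fun k => (c' k : ℝ))
    (fun k => by rw [hc' k]; split_ifs <;> push_cast <;> rfl)
  rw [← two_mul_sum_sum_ite_lt_abs_sub, ← two_mul_sum_sum_ite_lt_abs_sub] at hmerge
  have hd : ((n : ℝ) - j) * n ≠ 0 :=
    mul_ne_zero (sub_ne_zero.2 (by exact_mod_cast hjn.ne')) (by exact_mod_cast (by omega : n ≠ 0))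
  simp only [giniN]
  push_cast [Nat.cast_sub hjn.le]
  rw [add_sub_cancel_right, mul_div_cancel₀ _ hd]
  congr 1
  linarith

/-- Incremental update of the Gini index under a cluster merge: if `c` (of length
`n-j+1`, positive entries summing to `n`) has Gini index `g_{j-1}` and clusters
`s₁ ≠ s₂` are merged (yielding `c'` of length `n-j`, consisting of the remaining
entries together with `c s₁ + c s₂`), then the new Gini index `g_j` satisfies the
stated formula. -/
theorem gini_incremental_update (n j : ℕ) (hn : 2 ≤ n) (hj1 : 1 ≤ j) (hj2 : j ≤ n - 2)
    (c : Fin (n - j + 1) → ℕ) (hpos : ∀ i, 0 < c i) (hsum : (∑ i, c i) = n)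
    (s₁ s₂ : Fin (n - j + 1)) (hne : s₁ ≠ s₂)
    (e : Fin (n - j - 1) → Fin (n - j + 1)) (he : Function.Injective e)
    (hrange : ∀ i, e i ≠ s₁ ∧ e i ≠ s₂)
    (c' : Fin (n - j) → ℕ)
    (hc' : ∀ k : Fin (n - j),
      c' k = if h : k.1 < n - j - 1 then c (e ⟨k.1, h⟩) else c s₁ + c s₂) :
    giniN (n - j) n c' =
      (((n : ℝ) - (j : ℝ)) * (n : ℝ) * giniN (n - j + 1) n c
        + (∑ i : Fin (n - j + 1),
            (|(c i : ℝ) - (c s₁ : ℝ) - (c s₂ : ℝ)|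
              - |(c i : ℝ) - (c s₁ : ℝ)| - |(c i : ℝ) - (c s₂ : ℝ)|))
        - (c s₂ : ℝ) - (c s₁ : ℝ) + |(c s₁ : ℝ) - (c s₂ : ℝ)|) /
      (((n : ℝ) - (j : ℝ) - 1) * (n : ℝ)) :=
  gini_incremental_update_general n j c s₁ s₂ hne e he hrange c' hc'
end

section
/- For positive integer cluster sizes c_1,...,c_m summing to n with m ≥ 2, the Gini index G(c) = (Σ_{p<q} |c_p - c_q|)/((m-1)n) is at most (n-m)/n, with equality when one cluster has size n-m+1 and the remaining m-1 clusters are singletons. -/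
/-!
For sizes `x, y ≥ 1` we have `|x - y| ≤ (x - 1) + (y - 1)`, and summing `(x_p - 1) + (x_q - 1)` over
all pairs `p < q` of `m` indices counts every `x_i - 1` exactly `m - 1` times. Hence the numerator of
the Gini index is at most `(m - 1) ∑ (c_i - 1) = (m - 1)(n - m)`. Equality holds in every pair as
soon as the smaller member of each pair is `1`, which is the case for `(n - m + 1, 1, …, 1)`.
-/

open Finset

/-- The Gini index of a length-`m` vector of cluster sizes summing to `n`:
`G(c) = (Σ_{p<q}|c_p-c_q|)/((m-1)·n)`. -/
noncomputable def giniSizes (m n : ℕ) (c : Fin m → ℕ) : ℝ :=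
  (∑ p : Fin m, ∑ q : Fin m, if p < q then |(c p : ℝ) - (c q : ℝ)| else 0) /
    (((m : ℝ) - 1) * (n : ℝ))

def pairAbsDiffSum {ι R : Type*} [Fintype ι] [LinearOrder ι] [AddCommGroup R] [Lattice R]
    (x : ι → R) : R :=
  ∑ p, ∑ q, if p < q then |x p - x q| else 0

section PairSums

variable {ι R : Type*} [Fintype ι] [LinearOrder ι]

theorem sum_sum_ite_lt_add {M : Type*} [AddCommMonoid M] (a : ι → M) :
    ∑ p, ∑ q, (if p < q then a p + a q else 0) = (Fintype.card ι - 1) • ∑ i, a i := by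
  have hsplit : ∀ p q : ι, (if p < q then a p + a q else 0) =
      (if p < q then a p else 0) + if p < q then a q else 0 := fun p q => by
    rw [ite_add_ite, add_zero]
  have hoff : ∀ p, ∑ q, (if p < q then a p else 0) + ∑ q, (if q < p then a p else 0) =
      (Fintype.card ι - 1) • a p := fun p => by
    classical
    calc ∑ q, (if p < q then a p else 0) + ∑ q, (if q < p then a p else 0)
        = ∑ q ∈ univ.erase p, a p := by
          rw [← sum_add_distrib, ← filter_ne' univ p, sum_filter]
          refine sum_congr rfl fun q _ => ?_
          rcases lt_trichotomy p q with h | rfl | h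
          · simp [h, h.ne', h.not_gt]
          · simp
          · simp [h, h.ne, h.not_gt]
      _ = (Fintype.card ι - 1) • a p := by
          rw [sum_const, card_erase_of_mem (mem_univ p), card_univ]
  simp_rw [hsplit, sum_add_distrib]
  rw [sum_comm (f := fun p q => if p < q then a q else 0), ← sum_add_distrib]
  simp_rw [hoff, ← smul_sum]

variable [CommRing R] [LinearOrder R] [IsStrictOrderedRing R]

theorem abs_sub_le_sub_one_add_sub_one {x y : R} (hx : 1 ≤ x) (hy : 1 ≤ y) :
    |x - y| ≤ (x - 1) + (y - 1) :=
  abs_sub_le_iff.2 ⟨by linarith, by linarith⟩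

theorem pairAbsDiffSum_le {x : ι → R} (hx : ∀ i, 1 ≤ x i) :
    pairAbsDiffSum x ≤ (Fintype.card ι - 1) • ∑ i, (x i - 1) := by
  rw [pairAbsDiffSum, ← sum_sum_ite_lt_add]
  gcongr with p _ q _
  split_ifs
  · exact abs_sub_le_sub_one_add_sub_one (hx p) (hx q)
  · rfl

theorem pairAbsDiffSum_eq {x : ι → R} (hx : ∀ i, 1 ≤ x i) (hx1 : ∀ p q, p < q → x q = 1) :
    pairAbsDiffSum x = (Fintype.card ι - 1) • ∑ i, (x i - 1) := by
  rw [pairAbsDiffSum, ← sum_sum_ite_lt_add]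
  refine sum_congr rfl fun p _ => sum_congr rfl fun q _ => ?_
  split_ifs with h
  · rw [hx1 p q h, sub_self, add_zero, abs_of_nonneg (sub_nonneg.2 (hx p))]
  · rfl

end PairSums

theorem giniSizes_eq (m n : ℕ) (c : Fin m → ℕ) :
    giniSizes m n c = pairAbsDiffSum (fun i => (c i : ℝ)) / (((m : ℝ) - 1) * n) :=
  rfl

theorem sum_cast_sub_one_eq {m n : ℕ} {c : Fin m → ℕ} (hsum : ∑ i, c i = n) :
    ∑ i, ((c i : ℝ) - 1) = n - m := by
  simp [sum_sub_distrib, ← hsum]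

theorem sum_extreme_sizes {m n : ℕ} (hm : 1 ≤ m) (hmn : m ≤ n) :
    ∑ i : Fin m, (if i.val = 0 then n - m + 1 else 1) = n := by
  obtain ⟨k, rfl⟩ := Nat.exists_eq_add_of_le' hm
  rw [Fin.sum_univ_succ]
  simp only [Fin.val_zero, ↓reduceIte, Fin.val_succ, Nat.add_eq_zero_iff, one_ne_zero, and_false,
    sum_const, card_univ, Fintype.card_fin, smul_eq_mul, mul_one]
  omega

theorem gini_le_and_eq_extreme_general (n m : ℕ) (hm : 2 ≤ m)
    (c : Fin m → ℕ) (hpos : ∀ i, 1 ≤ c i)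
    (hsum : (∑ i, c i) = n) :
    giniSizes m n c ≤ ((n : ℝ) - (m : ℝ)) / (n : ℝ) ∧
    giniSizes m n (fun i => if i.val = 0 then n - m + 1 else 1) =
      ((n : ℝ) - (m : ℝ)) / (n : ℝ) := by
  have hmn : m ≤ n := hsum ▸ by simpa using card_nsmul_le_sum univ c 1 fun i _ => hpos i
  have hm1 : (0 : ℝ) < (m : ℝ) - 1 := by
    have : (2 : ℝ) ≤ m := by exact_mod_cast hm
    linarith
  have hpred : ((Fintype.card (Fin m) - 1 : ℕ) : ℝ) = (m : ℝ) - 1 := by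
    rw [Fintype.card_fin, Nat.cast_pred (by omega)]
  have htarget : ((n : ℝ) - m) / n = ((m : ℝ) - 1) * (n - m) / (((m : ℝ) - 1) * n) :=
    (mul_div_mul_left _ _ hm1.ne').symm
  rw [giniSizes_eq, giniSizes_eq, htarget]
  constructor
  · gcongr
    calc pairAbsDiffSum (fun i => (c i : ℝ))
        ≤ (Fintype.card (Fin m) - 1) • ∑ i, ((c i : ℝ) - 1) :=
          pairAbsDiffSum_le fun i => by exact_mod_cast hpos i
      _ = ((m : ℝ) - 1) * (n - m) := by rw [nsmul_eq_mul, hpred, sum_cast_sub_one_eq hsum]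
  · rw [pairAbsDiffSum_eq, nsmul_eq_mul, hpred,
      sum_cast_sub_one_eq (sum_extreme_sizes (by omega) hmn)]
    · intro i
      split_ifs <;> simp
    · intro p q hpq
      have : q.val ≠ 0 := (Nat.zero_le p.val).trans_lt hpq |>.ne'
      simp [this]

/-- For positive integer cluster sizes `c₁ ≥ … ≥ c_m ≥ 1` summing to `n` (`m ≥ 2`),
the Gini index is at most `(n-m)/n`, with equality at `(n-m+1, 1, …, 1)`. -/
theorem gini_le_and_eq_extreme (n m : ℕ) (hm : 2 ≤ m)
    (c : Fin m → ℕ) (hmono : Antitone c) (hpos : ∀ i, 1 ≤ c i)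
    (hsum : (∑ i, c i) = n) :
    giniSizes m n c ≤ ((n : ℝ) - (m : ℝ)) / (n : ℝ) ∧
    giniSizes m n (fun i => if i.val = 0 then n - m + 1 else 1) =
      ((n : ℝ) - (m : ℝ)) / (n : ℝ) :=
  gini_le_and_eq_extreme_general n m hm c hpos hsum
end
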